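/- Let K be a simplicial complex on [m] and let ψ : I → J be a fold of [m]. Then the complex L_ψ contains K (every face of K is a face of L_ψ), and L_ψ folds onto the fold of K, i.e. (L_ψ)_{∇(I,J)} = K_{∇(I,J)}. Consequently L_ψ is the largest simplicial complex on [m] whose fold under ψ is contained in K_{∇(I,J)}. -/

import Mathlib

open scoped Classical

/-- An abstract simplicial complex on the vertex type `V`: a collection of finite
subsets (its faces) containing the empty set and closed under taking subsets. -/
def IsComplex {V : Type*} (K : Set (Finset V)) : Prop :=
  ∅ ∈ K ∧ ∀ σ ∈ K, ∀ τ ⊆ σ, τ ∈ K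

/-- `ψ` (already extended to all of `V` by the identity off `I`) is a fold of the
vertex set with disjoint source `I` and target `J`, surjective from `I` onto `J`. -/
def IsFold {V : Type*} (I J : Finset V) (ψ : V → V) : Prop :=
  Disjoint I J ∧ (∀ v ∈ I, ψ v ∈ J) ∧ (∀ v ∉ I, ψ v = v) ∧ ∀ w ∈ J, ∃ v ∈ I, ψ v = w

/-- The folded complex of `K` under the extended fold map `ψ`: its faces are exactly
the images `ψ(σ)` of faces `σ` of `K`. -/
def foldFaces {V : Type*} [DecidableEq V] (K : Set (Finset V)) (f : V → V) :
    Set (Finset V) :=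
  {τ | ∃ σ ∈ K, τ = σ.image f}

/-- The complex `L_ψ = K_{∇(I,J)}⟨Δ[{k_1} ⊔ I_{k_1}], …, Δ[{k_l} ⊔ I_{k_l}]⟩` on `[m]`:
substitution of the full simplices on the blocks `{t} ⊔ ψ⁻¹(t)` (for `t ∈ [m]∖I`)
into the folded complex `K_{∇(I,J)}`. -/
def LpsiFaces {m : ℕ} (K : Set (Finset (Fin m))) (I : Finset (Fin m))
    (ψ : Fin m → Fin m) : Set (Finset (Fin m)) :=
  {F | ∃ σ : Fin m → Finset (Fin m),
    (∀ t ∉ I, σ t ⊆ insert t (I.filter fun w => ψ w = t)) ∧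
    F = (Finset.univ \ I).biUnion σ ∧
    ((Finset.univ \ I).filter fun t => (σ t).Nonempty) ∈ foldFaces K ψ}

/-!
A face `F` of `L_ψ` is a union of pieces `σ t ⊆ {t} ⊔ ψ⁻¹(t)`, one for each vertex `t ∉ I`,
whose supports form a face of `K_{∇(I,J)}`. The blocks `{t} ⊔ ψ⁻¹(t)` are exactly the fibres
of the extended fold map, so the support of the pieces is just `ψ(F)`, and cutting an arbitrary
`F` along the fibres shows that `F ∈ L_ψ` if and only if `ψ(F) ∈ K_{∇(I,J)}`. All three claims
are immediate from this description.
-/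

theorem Finset.image_biUnion_eq_filter_nonempty {α β : Type*} [DecidableEq α] [DecidableEq β]
    {s : Finset β} {σ : β → Finset α} {f : α → β} (h : ∀ t ∈ s, ∀ v ∈ σ t, f v = t) :
    (s.biUnion σ).image f = s.filter fun t => (σ t).Nonempty := by
  ext t
  simp only [Finset.mem_image, Finset.mem_biUnion, Finset.mem_filter]
  constructor
  · rintro ⟨v, ⟨u, hu, hv⟩, rfl⟩
    rw [h u hu v hv]
    exact ⟨hu, v, hv⟩
  · rintro ⟨ht, v, hv⟩
    exact ⟨v, ⟨t, ht, hv⟩, h t ht v hv⟩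

namespace IsFold

variable {V : Type*} [DecidableEq V] {I J : Finset V} {ψ : V → V}

theorem apply_notMem (hψ : IsFold I J ψ) (v : V) : ψ v ∉ I := by
  obtain ⟨hdisj, hIJ, hid, -⟩ := hψ
  by_cases hv : v ∈ I
  · exact Finset.disjoint_right.mp hdisj (hIJ v hv)
  · rwa [hid v hv]

theorem mem_insert_filter_iff (hψ : IsFold I J ψ) {t v : V} (ht : t ∉ I) :
    v ∈ insert t (I.filter fun w => ψ w = t) ↔ ψ v = t := by
  obtain ⟨-, -, hid, -⟩ := hψ
  by_cases hv : v ∈ I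
  · simp [hv, ne_of_mem_of_not_mem hv ht]
  · simp [hv, hid v hv, eq_comm]

end IsFold

theorem mem_LpsiFaces_iff {m : ℕ} {K : Set (Finset (Fin m))} {I J : Finset (Fin m)}
    {ψ : Fin m → Fin m} (hψ : IsFold I J ψ) {F : Finset (Fin m)} :
    F ∈ LpsiFaces K I ψ ↔ F.image ψ ∈ foldFaces K ψ := by
  constructor
  · rintro ⟨σ, hσ, rfl, hface⟩
    rwa [Finset.image_biUnion_eq_filter_nonempty fun t ht v hv =>
      (hψ.mem_insert_filter_iff (Finset.mem_sdiff.mp ht).2).mp (hσ t (Finset.mem_sdiff.mp ht).2 hv)]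
  · intro hface
    have hfibres : ∀ t ∈ Finset.univ \ I, ∀ v ∈ F.filter (fun w => ψ w = t), ψ v = t :=
      fun t _ v hv => (Finset.mem_filter.mp hv).2
    have hcover : (Finset.univ \ I).biUnion (fun t => F.filter fun w => ψ w = t) = F :=
      Finset.biUnion_filter_eq_of_maps_to fun v _ =>
        Finset.mem_sdiff.mpr ⟨Finset.mem_univ _, hψ.apply_notMem v⟩
    refine ⟨fun t => F.filter fun w => ψ w = t, fun t ht v hv => ?_, hcover.symm, ?_⟩
    · exact (hψ.mem_insert_filter_iff ht).mpr (Finset.mem_filter.mp hv).2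
    · rwa [← Finset.image_biUnion_eq_filter_nonempty hfibres, hcover]

theorem Lpsi_maximal_general {m : ℕ} (K : Set (Finset (Fin m)))
    (I J : Finset (Fin m)) (ψ : Fin m → Fin m) (hψ : IsFold I J ψ) :
    K ⊆ LpsiFaces K I ψ ∧
      foldFaces (LpsiFaces K I ψ) ψ = foldFaces K ψ ∧
      ∀ L' : Set (Finset (Fin m)), IsComplex L' →
        foldFaces L' ψ ⊆ foldFaces K ψ → L' ⊆ LpsiFaces K I ψ := by
  have hK_sub : K ⊆ LpsiFaces K I ψ := fun σ hσ => (mem_LpsiFaces_iff hψ).mpr ⟨σ, hσ, rfl⟩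
  refine ⟨hK_sub, ?_, fun L' _ hL' F hF => (mem_LpsiFaces_iff hψ).mpr (hL' ⟨F, hF, rfl⟩)⟩
  apply Set.Subset.antisymm
  · rintro _ ⟨F, hF, rfl⟩
    exact (mem_LpsiFaces_iff hψ).mp hF
  · rintro _ ⟨σ, hσ, rfl⟩
    exact ⟨σ, hK_sub hσ, rfl⟩

/-- `L_ψ` contains `K`, the fold of `L_ψ` equals the fold of `K`, and `L_ψ` is the
largest simplicial complex on `[m]` whose fold under `ψ` is contained in
`K_{∇(I,J)}`. -/
theorem Lpsi_maximal {m : ℕ} (K : Set (Finset (Fin m))) (hK : IsComplex K)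
    (I J : Finset (Fin m)) (ψ : Fin m → Fin m) (hψ : IsFold I J ψ) :
    K ⊆ LpsiFaces K I ψ ∧
      foldFaces (LpsiFaces K I ψ) ψ = foldFaces K ψ ∧
      ∀ L' : Set (Finset (Fin m)), IsComplex L' →
        foldFaces L' ψ ⊆ foldFaces K ψ → L' ⊆ LpsiFaces K I ψ :=
  Lpsi_maximal_general K I J ψ hψ
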